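/- Infinite-memory ε-best-responses may be necessary: There exists a mean-payoff game G, an ε > 0, and a Player 0 strategy σ₀ such that the set BR₁^ε(σ₀) of ε-best-responses of Player 1 is nonempty but contains no finite-memory strategy. -/

import Mathlib

open Filter

namespace MPG

variable {V : Type}

/-- A strategy maps histories (finite sequences of visited vertices, last = current) to a next vertex. -/
abbrev Strat (V : Type) := List V → V

/-- A bi-weighted mean-payoff game: finite directed graph with every vertex having a successor,
a partition of vertices between the players (`owner0`), and two weight functions. -/
structure Game (V : Type) where
  E : V → V → Prop
  succ : ∀ v, ∃ v', E v v'
  owner0 : V → Bool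
  w0 : V → V → ℝ
  w1 : V → V → ℝ

/-- A valid Player-0 strategy respects the edges at Player-0 vertices. -/
def Game.Valid0 (G : Game V) (σ : Strat V) : Prop :=
  ∀ (h : List V) (u : V), h.getLast? = some u → G.owner0 u = true → G.E u (σ h)

/-- A valid Player-1 strategy respects the edges at Player-1 vertices. -/
def Game.Valid1 (G : Game V) (σ : Strat V) : Prop :=
  ∀ (h : List V) (u : V), h.getLast? = some u → G.owner0 u = false → G.E u (σ h)

/-- Finite prefixes of the unique outcome of a strategy profile from `v`. -/
def outPrefix (G : Game V) (σ0 σ1 : Strat V) (v : V) : ℕ → List V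
  | 0 => [v]
  | n + 1 =>
      outPrefix G σ0 σ1 v n ++
        [if G.owner0 ((outPrefix G σ0 σ1 v n).getLastD v) then
            σ0 (outPrefix G σ0 σ1 v n)
          else σ1 (outPrefix G σ0 σ1 v n)]

/-- The unique outcome play `Out_v(σ0,σ1)`. -/
def outcome (G : Game V) (σ0 σ1 : Strat V) (v : V) (n : ℕ) : V :=
  (outPrefix G σ0 σ1 v n).getLastD v

/-- liminf mean-payoff of a play for a weight function. -/
noncomputable def mp (w : V → V → ℝ) (π : ℕ → V) : ℝ :=
  Filter.liminf (fun k : ℕ => (∑ i ∈ Finset.range k, w (π i) (π (i + 1))) / (k : ℝ))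
    Filter.atTop

/-- The ε-best-responses of Player 1 to a Player-0 strategy `σ0`. -/
def BR (G : Game V) (ε : ℝ) (σ0 : Strat V) : Set (Strat V) :=
  {σ1 | G.Valid1 σ1 ∧ ∀ (v : V) (σ1' : Strat V), G.Valid1 σ1' →
      mp G.w1 (outcome G σ0 σ1 v) > mp G.w1 (outcome G σ0 σ1' v) - ε}

/-- `ASV^ε(σ0)(v)`: value of `σ0` against ε-best responses. -/
noncomputable def ASVe (G : Game V) (ε : ℝ) (σ0 : Strat V) (v : V) : ℝ :=
  sInf ((fun σ1 => mp G.w0 (outcome G σ0 σ1 v)) '' BR G ε σ0)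

/-- `ASV^ε(v)`: the ε-adversarial Stackelberg value. -/
noncomputable def ASVeV (G : Game V) (ε : ℝ) (v : V) : ℝ :=
  sSup {x : ℝ | ∃ σ0 : Strat V, G.Valid0 σ0 ∧ x = ASVe G ε σ0 v}

/-- `ASV(σ0)(v) = sup_{ε>0} ASV^ε(σ0)(v)`. -/
noncomputable def ASVs (G : Game V) (σ0 : Strat V) (v : V) : ℝ :=
  sSup {x : ℝ | ∃ ε : ℝ, 0 < ε ∧ x = ASVe G ε σ0 v}

/-- Zero-sum worst-case value of a Player-0 strategy. -/
noncomputable def Val (G : Game V) (σ0 : Strat V) (v : V) : ℝ :=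
  sInf {x : ℝ | ∃ σ1 : Strat V, G.Valid1 σ1 ∧ x = mp G.w0 (outcome G σ0 σ1 v)}

/-- `H ∈ G^{±δ}`: same arena, every edge weight changed by strictly less than δ. -/
def Perturbed (G H : Game V) (δ : ℝ) : Prop :=
  H.E = G.E ∧ H.owner0 = G.owner0 ∧
    ∀ u v : V, G.E u v → |H.w0 u v - G.w0 u v| < δ ∧ |H.w1 u v - G.w1 u v| < δ

/-- A finite-memory strategy: realizable by a finite-state machine reading the history. -/
def FinMem (σ : Strat V) : Prop :=
  ∃ (M : Type) (_ : Fintype M) (m0 : M) (upd : M → V → M) (o : M → V),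
    ∀ h : List V, σ h = o (List.foldl upd m0 h)

/-- A vertex is `(c,d)^ε`-bad if Player 1 can enforce `MP₀ ≤ c ∧ MP₁ > d - ε` from it. -/
def Bad (G : Game V) (c d ε : ℝ) (v : V) : Prop :=
  ∃ σ1 : Strat V, G.Valid1 σ1 ∧ ∀ σ0 : Strat V, G.Valid0 σ0 →
    mp G.w0 (outcome G σ0 σ1 v) ≤ c ∧ mp G.w1 (outcome G σ0 σ1 v) > d - ε

end MPG

/-!
We use a simpler witness than the paper's waiting game. Player 0 checks each choice of Player 1
against the fixed choice sequence `k ↦ [k is a square]` and sends the play to a sink of weight 0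
after the first deviation; all other edges have weight 1. Following the sequence therefore yields
mean payoff 1, and every `1`-best response must follow it forever. A finite-memory strategy, run
along that play, is driven by a self-map of its finite memory, so its choices are eventually
periodic, while the squares are not.
-/

open Filter Topology

theorem Function.exists_periodic_iterate_of_finite {α : Type*} [Finite α] (F : α → α) (x : α) :
    ∃ i d, 0 < d ∧ Function.Periodic (fun k => F^[i + k] x) d := by
  obtain ⟨i, j, hne, hij⟩ := Finite.exists_ne_map_eq_of_infinite fun k : ℕ => F^[k] x
  wlog hlt : i < j generalizing i j
  · exact this j i hne.symm hij.symm (by omega)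
  refine ⟨i, j - i, by omega, fun k => ?_⟩
  simp only
  rw [show i + (k + (j - i)) = k + j by omega, Function.iterate_add_apply, ← hij,
    ← Function.iterate_add_apply, Nat.add_comm]

theorem Nat.not_periodic_isSquare (i : ℕ) {d : ℕ} (hd : 0 < d) :
    ¬ Function.Periodic (fun k => IsSquare (i + k)) d := by
  intro hper
  set K := i + d
  have hK : i + (K * K - i) = K * K := by have : K ≤ K * K := Nat.le_mul_self K; omega
  have hsq : IsSquare (i + (K * K - i)) := ⟨K, hK⟩
  have hnsq : ¬ IsSquare (i + (K * K - i) + d) := by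
    rintro ⟨t, ht⟩
    rw [hK] at ht
    exact Nat.not_exists_sq (m := K) (by omega) (by nlinarith [show d ≤ K by omega]) ⟨t, ht.symm⟩
  exact hnsq (by simpa only [add_assoc] using (hper (K * K - i)).mpr hsq)

namespace MPG

variable {V : Type}

section Outcome

variable (G : Game V) (σ0 σ1 : Strat V) (v : V)

theorem outPrefix_succ (n : ℕ) :
    outPrefix G σ0 σ1 v (n + 1) = outPrefix G σ0 σ1 v n ++ [outcome G σ0 σ1 v (n + 1)] := by
  simp [outcome, outPrefix]

theorem outcome_succ (n : ℕ) :
    outcome G σ0 σ1 v (n + 1) =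
      if G.owner0 (outcome G σ0 σ1 v n) then σ0 (outPrefix G σ0 σ1 v n)
      else σ1 (outPrefix G σ0 σ1 v n) := by
  simp [outcome, outPrefix]

theorem getLast?_outPrefix (n : ℕ) :
    (outPrefix G σ0 σ1 v n).getLast? = some (outcome G σ0 σ1 v n) := by
  cases n <;> simp [outPrefix, outcome]

theorem length_outPrefix (n : ℕ) : (outPrefix G σ0 σ1 v n).length = n + 1 := by
  induction n with
  | zero => rfl
  | succ n ih => simp [outPrefix_succ, ih]

end Outcome

section MeanPayoff

variable {w : V → V → ℝ} {π : ℕ → V}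

theorem mp_eq_of_eventually_eq {a : ℝ} (h : ∀ᶠ i in atTop, w (π i) (π (i + 1)) = a) :
    mp w π = a := by
  have hlim : Tendsto (fun i => w (π i) (π (i + 1))) atTop (𝓝 a) :=
    tendsto_const_nhds.congr' (h.mono fun _ hi => hi.symm)
  unfold mp
  simp_rw [div_eq_inv_mul]
  exact hlim.cesaro.liminf_eq

theorem mp_le_of_forall_le {a b : ℝ} (hlo : ∀ i, a ≤ w (π i) (π (i + 1)))
    (hhi : ∀ i, w (π i) (π (i + 1)) ≤ b) : mp w π ≤ b := by
  have hbounds : ∀ k : ℕ, 1 ≤ k →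
      a ≤ (∑ i ∈ Finset.range k, w (π i) (π (i + 1))) / k ∧
        (∑ i ∈ Finset.range k, w (π i) (π (i + 1))) / k ≤ b := by
    intro k hk
    have hk' : (0 : ℝ) < k := by exact_mod_cast hk
    constructor
    · rw [le_div_iff₀ hk']
      simpa [mul_comm] using (Finset.range k).card_nsmul_le_sum _ a fun i _ => hlo i
    · rw [div_le_iff₀ hk']
      simpa [mul_comm] using (Finset.range k).sum_le_card_nsmul _ b fun i _ => hhi i
  have hev := eventually_atTop.mpr ⟨1, hbounds⟩
  exact liminf_le_of_frequently_le (hev.mono fun _ h => h.2).frequently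
    (isBoundedUnder_of_eventually_ge (hev.mono fun _ h => h.1))

end MeanPayoff

theorem FinMem.exists_periodic_of_append {σ : Strat V} (hσ : FinMem σ) (a : V)
    {h : ℕ → List V} (hh : ∀ k, h (k + 1) = h k ++ [σ (h k), a]) :
    ∃ i d, 0 < d ∧ Function.Periodic (fun k => σ (h (i + k))) d := by
  obtain ⟨M, _, m0, upd, o, ho⟩ := hσ
  set F : M → M := fun m => upd (upd m (o m)) a
  have hstate : ∀ k, (h k).foldl upd m0 = F^[k] ((h 0).foldl upd m0) := by
    intro k
    induction k with
    | zero => rfl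
    | succ k ih =>
      rw [Function.iterate_succ_apply', ← ih, hh, List.foldl_append, ho]
      rfl
  obtain ⟨i, d, hd, hper⟩ := Function.exists_periodic_iterate_of_finite F ((h 0).foldl upd m0)
  refine ⟨i, d, hd, ?_⟩
  intro k
  simp only
  rw [ho, ho, hstate (i + (k + d)), hstate (i + k)]
  exact congrArg o (hper k)

end MPG

namespace SquareGame

open MPG

inductive Vtx
  | p
  | q (b : Bool)
  | c
  deriving DecidableEq, Fintype

def game : Game Vtx where
  E
    | .p, .q _ => True
    | .q _, .p => True
    | .q _, .c => True
    | .c, .c => True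
    | _, _ => False
  succ
    | .p => ⟨.q true, trivial⟩
    | .q _ => ⟨.p, trivial⟩
    | .c => ⟨.c, trivial⟩
  owner0 v := v != .p
  w0 _ _ := 0
  w1 _ v := if v = .c then 0 else 1

/-- Along the play from `p`, Player 1 moves at the histories of length `2 * k + 1`. -/
def prescribed : Strat Vtx := fun h => .q (decide (IsSquare (h.length / 2)))

def enforcer : Strat Vtx := fun h =>
  if h.getLast? = some .c ∨
      (h.dropLast.getLast? = some .p ∧ h.getLast? ≠ some (prescribed h.dropLast)) then .c
  else .p

@[simp] theorem owner0_p : game.owner0 .p = false := rfl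

@[simp] theorem owner0_q (b : Bool) : game.owner0 (.q b) = true := rfl

@[simp] theorem owner0_c : game.owner0 .c = true := rfl

theorem enforcer_of_getLast?_eq_c {h : List Vtx} (hc : h.getLast? = some .c) : enforcer h = .c :=
  if_pos (Or.inl hc)

theorem valid0_enforcer : game.Valid0 enforcer := by
  intro h u hu hown
  cases u with
  | p => simp at hown
  | q b => unfold enforcer; split <;> trivial
  | c => rw [enforcer_of_getLast?_eq_c hu]; trivial

theorem valid1_prescribed : game.Valid1 prescribed := by
  intro h u _ hown
  cases u with
  | p => trivial
  | q b => simp at hown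
  | c => simp at hown

section Outcome

variable {σ1 : Strat Vtx} {v : Vtx}

theorem outcome_succ_of_eq_p {n : ℕ} (hp : outcome game enforcer σ1 v n = .p) :
    outcome game enforcer σ1 v (n + 1) = σ1 (outPrefix game enforcer σ1 v n) := by
  rw [outcome_succ, hp, owner0_p, if_neg Bool.false_ne_true]

theorem outcome_succ_of_eq_q {n : ℕ} {b : Bool} (hq : outcome game enforcer σ1 v n = .q b) :
    outcome game enforcer σ1 v (n + 1) = enforcer (outPrefix game enforcer σ1 v n) := by
  rw [outcome_succ, hq, owner0_q, if_pos rfl]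

theorem enforcer_outPrefix_succ (n : ℕ) :
    enforcer (outPrefix game enforcer σ1 v (n + 1)) =
      if outcome game enforcer σ1 v (n + 1) = .c ∨
          (outcome game enforcer σ1 v n = .p ∧
            outcome game enforcer σ1 v (n + 1) ≠ prescribed (outPrefix game enforcer σ1 v n))
      then .c else .p := by
  simp [enforcer, outPrefix_succ game enforcer σ1 v n, getLast?_outPrefix]

theorem outcome_enforcer_succ_of_eq_c {n : ℕ} (hc : outcome game enforcer σ1 v n = .c) :
    outcome game enforcer σ1 v (n + 1) = .c := by
  rw [outcome_succ, hc, owner0_c, if_pos rfl]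
  exact enforcer_of_getLast?_eq_c ((getLast?_outPrefix ..).trans (congrArg some hc))

theorem eventually_outcome_enforcer_eq_c {m : ℕ} (hc : outcome game enforcer σ1 v m = .c) :
    ∀ᶠ n in atTop, outcome game enforcer σ1 v n = .c := by
  refine eventually_atTop.2 ⟨m, fun n hmn => ?_⟩
  induction n, hmn using Nat.le_induction with
  | base => exact hc
  | succ n _ ih => exact outcome_enforcer_succ_of_eq_c ih

theorem outcome_prescribed_ne_c (hv : v ≠ .c) (n : ℕ) :
    outcome game enforcer prescribed v n ≠ .c := by
  induction n with
  | zero => exact hv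
  | succ n ih =>
    rcases hx : outcome game enforcer prescribed v n with _ | b | _
    · rw [outcome_succ_of_eq_p hx]
      simp [prescribed]
    · rw [outcome_succ_of_eq_q hx]
      cases n with
      | zero => simp [enforcer, outPrefix, hv]
      | succ m =>
        rw [enforcer_outPrefix_succ, if_neg]
        · simp
        rintro (hc | ⟨hp, hne⟩)
        · rw [hx] at hc
          cases hc
        · exact hne (outcome_succ_of_eq_p hp)
    · exact absurd hx ih

theorem follows_prescribed_of_ne_c (hσ1 : game.Valid1 σ1) {n : ℕ}
    (hp : outcome game enforcer σ1 v n = .p) (hc : outcome game enforcer σ1 v (n + 2) ≠ .c) :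
    σ1 (outPrefix game enforcer σ1 v n) = prescribed (outPrefix game enforcer σ1 v n) ∧
      outcome game enforcer σ1 v (n + 2) = .p := by
  have hmove := hσ1 _ _ ((getLast?_outPrefix ..).trans (congrArg some hp)) owner0_p
  rw [← outcome_succ_of_eq_p hp] at hmove ⊢
  obtain ⟨b, hb⟩ : ∃ b, outcome game enforcer σ1 v (n + 1) = .q b := by
    rcases h : outcome game enforcer σ1 v (n + 1) with _ | b | _
    · rw [h] at hmove; exact False.elim hmove
    · exact ⟨b, rfl⟩
    · rw [h] at hmove; exact False.elim hmove
  have hnext := outcome_succ_of_eq_q hb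
  have hfollow :
      outcome game enforcer σ1 v (n + 1) = prescribed (outPrefix game enforcer σ1 v n) := by
    by_contra hne
    exact hc (by rw [hnext, enforcer_outPrefix_succ, if_pos (Or.inr ⟨hp, hne⟩)])
  refine ⟨hfollow, ?_⟩
  rw [hnext, enforcer_outPrefix_succ, if_neg]
  rintro (hc' | ⟨_, hne⟩)
  · rw [hb] at hc'
    cases hc'
  · exact hne hfollow

theorem outcome_two_mul_eq_p (hσ1 : game.Valid1 σ1)
    (hnc : ∀ n, outcome game enforcer σ1 .p n ≠ .c) (k : ℕ) :
    outcome game enforcer σ1 .p (2 * k) = .p := by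
  induction k with
  | zero => rfl
  | succ k ih => exact (follows_prescribed_of_ne_c hσ1 ih (hnc _)).2

theorem not_finMem_of_forall_ne_c (hσ1 : game.Valid1 σ1)
    (hnc : ∀ n, outcome game enforcer σ1 .p n ≠ .c) : ¬ FinMem σ1 := by
  intro hfin
  set h : ℕ → List Vtx := fun k => outPrefix game enforcer σ1 .p (2 * k)
  have hp := outcome_two_mul_eq_p hσ1 hnc
  have hstep : ∀ k, h (k + 1) = h k ++ [σ1 (h k), .p] := fun k => by
    have hnext : outcome game enforcer σ1 .p (2 * k + 1 + 1) = .p := hp (k + 1)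
    simp only [h, Nat.mul_succ, outPrefix_succ, outcome_succ_of_eq_p (hp k), hnext,
      List.append_assoc, List.cons_append, List.nil_append]
  have hsquare : ∀ k, σ1 (h k) = .q (decide (IsSquare k)) := fun k => by
    rw [(follows_prescribed_of_ne_c hσ1 (hp k) (hnc _)).1]
    simp [prescribed, length_outPrefix, show (2 * k + 1) / 2 = k by omega]
  obtain ⟨i, d, hd, hper⟩ := hfin.exists_periodic_of_append .p hstep
  exact Nat.not_periodic_isSquare i hd fun k => by simpa [hsquare] using hper k

end Outcome

theorem mp_w1_le_one (π : ℕ → Vtx) : mp game.w1 π ≤ 1 :=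
  mp_le_of_forall_le (a := 0) (fun _ => by dsimp only [game]; split <;> norm_num)
    (fun _ => by dsimp only [game]; split <;> norm_num)

theorem mp_w1_eq_one {π : ℕ → Vtx} (h : ∀ n, π n ≠ .c) : mp game.w1 π = 1 :=
  mp_eq_of_eventually_eq (Eventually.of_forall fun i => if_neg (h (i + 1)))

theorem mp_w1_eq_zero {π : ℕ → Vtx} (h : ∀ᶠ n in atTop, π n = .c) : mp game.w1 π = 0 :=
  mp_eq_of_eventually_eq (((tendsto_add_atTop_nat 1).eventually h).mono fun _ hc => if_pos hc)

theorem prescribed_mem_BR : prescribed ∈ BR game 1 enforcer := by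
  refine ⟨valid1_prescribed, fun v σ1 _ => ?_⟩
  by_cases hv : v = .c
  · subst hv
    rw [mp_w1_eq_zero (eventually_outcome_enforcer_eq_c (m := 0) rfl),
      mp_w1_eq_zero (eventually_outcome_enforcer_eq_c (m := 0) rfl)]
    norm_num
  · rw [mp_w1_eq_one (outcome_prescribed_ne_c hv)]
    linarith [mp_w1_le_one (outcome game enforcer σ1 v)]

theorem not_finMem_of_mem_BR {σ1 : Strat Vtx} (hσ1 : σ1 ∈ BR game 1 enforcer) : ¬ FinMem σ1 := by
  refine not_finMem_of_forall_ne_c hσ1.1 fun n hc => ?_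
  have hbest := hσ1.2 .p prescribed valid1_prescribed
  rw [mp_w1_eq_zero (eventually_outcome_enforcer_eq_c hc),
    mp_w1_eq_one (outcome_prescribed_ne_c (by decide))] at hbest
  norm_num at hbest

end SquareGame

/-- there is a game, an ε > 0 and a Player-0 strategy whose set of
ε-best responses is nonempty but contains no finite-memory strategy. -/
theorem stmt14 :
    ∃ (V : Type) (_ : Fintype V) (G : MPG.Game V) (ε : ℝ) (σ0 : MPG.Strat V),
      0 < ε ∧ G.Valid0 σ0 ∧ (MPG.BR G ε σ0).Nonempty ∧
        ∀ σ1 ∈ MPG.BR G ε σ0, ¬ MPG.FinMem σ1 :=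
  ⟨SquareGame.Vtx, inferInstance, SquareGame.game, 1, SquareGame.enforcer, one_pos,
    SquareGame.valid0_enforcer, ⟨_, SquareGame.prescribed_mem_BR⟩,
    fun _ => SquareGame.not_finMem_of_mem_BR⟩
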